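/- Let 2 ≤ d1 ≤ d2 ≤ d3 ≤ d4, let 2 ≤ s ≤ d1, and let |φ⟩ = Σ a_{ijkr}|ijkr⟩ be a unit vector in ℂ^{d1}⊗ℂ^{d2}⊗ℂ^{d3}⊗ℂ^{d4}. Then C_4²(|φ⟩) ≥ [ (d1−2 choose s−2)(d2−2 choose s−2)(d3−1 choose s−1)(d4−1 choose s−1) ]^{−1} · Σ C_4²(|φ⟩_{s⊗s⊗s⊗s}), where the sum runs over all choices of s-element subsets S_1 ⊆ {1,…,d1}, …, S_4 ⊆ {1,…,d4}, |φ⟩_{s⊗s⊗s⊗s} = Σ_{i∈S_1, j∈S_2, k∈S_3, r∈S_4} a_{ijkr}|ijkr⟩ is the corresponding unnormalized substate, and C_4² of an unnormalized four-partite vector is given by the homogeneous coefficient formula C_4²(ψ) = (1/4) Σ ( |b_{ijkr}b_{pqth} − b_{pjkr}b_{iqth}|² + |b_{ijkr}b_{pqth} − b_{iqkr}b_{pjth}|² + |b_{ijkr}b_{pqth} − b_{ijtr}b_{pqkh}|² + |b_{ijkr}b_{pqth} − b_{ijkh}b_{pqtr}|² + |b_{ijkr}b_{pqth} − b_{pqkr}b_{ijth}|²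 + |b_{ijkr}b_{pqth} − b_{pjtr}b_{iqkh}|² + |b_{ijkr}b_{pqth} − b_{pjkh}b_{iqtr}|² ) over its coefficients b. -/

import Mathlib

open scoped BigOperators

namespace Stmt14

/-- The (unnormalized) projector `|v⟩⟨v|` associated to a vector `v`. -/
noncomputable def outer {I : Type*} (v : I → ℂ) : Matrix I I ℂ :=
  Matrix.of fun x y => v x * (starRingEnd ℂ) (v y)

variable {d1 d2 d3 d4 : ℕ}

/-- `tr(ρ_α²)` for `α = {1}`. -/
noncomputable def t1sq
    (ρ : Matrix (Fin d1 × Fin d2 × Fin d3 × Fin d4) (Fin d1 × Fin d2 × Fin d3 × Fin d4) ℂ) : ℂ :=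
  ∑ i, ∑ p, (∑ j, ∑ k, ∑ r, ρ (i, j, k, r) (p, j, k, r)) * (∑ j, ∑ k, ∑ r, ρ (p, j, k, r) (i, j, k, r))

/-- `tr(ρ_α²)` for `α = {2}`. -/
noncomputable def t2sq
    (ρ : Matrix (Fin d1 × Fin d2 × Fin d3 × Fin d4) (Fin d1 × Fin d2 × Fin d3 × Fin d4) ℂ) : ℂ :=
  ∑ j, ∑ q, (∑ i, ∑ k, ∑ r, ρ (i, j, k, r) (i, q, k, r)) * (∑ i, ∑ k, ∑ r, ρ (i, q, k, r) (i, j, k, r))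

/-- `tr(ρ_α²)` for `α = {3}`. -/
noncomputable def t3sq
    (ρ : Matrix (Fin d1 × Fin d2 × Fin d3 × Fin d4) (Fin d1 × Fin d2 × Fin d3 × Fin d4) ℂ) : ℂ :=
  ∑ k, ∑ t, (∑ i, ∑ j, ∑ r, ρ (i, j, k, r) (i, j, t, r)) * (∑ i, ∑ j, ∑ r, ρ (i, j, t, r) (i, j, k, r))

/-- `tr(ρ_α²)` for `α = {4}`. -/
noncomputable def t4sq
    (ρ : Matrix (Fin d1 × Fin d2 × Fin d3 × Fin d4) (Fin d1 × Fin d2 × Fin d3 × Fin d4) ℂ) : ℂ :=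
  ∑ r, ∑ h, (∑ i, ∑ j, ∑ k, ρ (i, j, k, r) (i, j, k, h)) * (∑ i, ∑ j, ∑ k, ρ (i, j, k, h) (i, j, k, r))

/-- `tr(ρ_α²)` for `α = {1,2}`. -/
noncomputable def t12sq
    (ρ : Matrix (Fin d1 × Fin d2 × Fin d3 × Fin d4) (Fin d1 × Fin d2 × Fin d3 × Fin d4) ℂ) : ℂ :=
  ∑ i, ∑ p, ∑ j, ∑ q, (∑ k, ∑ r, ρ (i, j, k, r) (p, q, k, r)) * (∑ k, ∑ r, ρ (p, q, k, r) (i, j, k, r))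

/-- `tr(ρ_α²)` for `α = {1,3}`. -/
noncomputable def t13sq
    (ρ : Matrix (Fin d1 × Fin d2 × Fin d3 × Fin d4) (Fin d1 × Fin d2 × Fin d3 × Fin d4) ℂ) : ℂ :=
  ∑ i, ∑ p, ∑ k, ∑ t, (∑ j, ∑ r, ρ (i, j, k, r) (p, j, t, r)) * (∑ j, ∑ r, ρ (p, j, t, r) (i, j, k, r))

/-- `tr(ρ_α²)` for `α = {1,4}`. -/
noncomputable def t14sq
    (ρ : Matrix (Fin d1 × Fin d2 × Fin d3 × Fin d4) (Fin d1 × Fin d2 × Fin d3 × Fin d4) ℂ) : ℂ :=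
  ∑ i, ∑ p, ∑ r, ∑ h, (∑ j, ∑ k, ρ (i, j, k, r) (p, j, k, h)) * (∑ j, ∑ k, ρ (p, j, k, h) (i, j, k, r))

/-- `tr(ρ_α²)` for `α = {2,3}`. -/
noncomputable def t23sq
    (ρ : Matrix (Fin d1 × Fin d2 × Fin d3 × Fin d4) (Fin d1 × Fin d2 × Fin d3 × Fin d4) ℂ) : ℂ :=
  ∑ j, ∑ q, ∑ k, ∑ t, (∑ i, ∑ r, ρ (i, j, k, r) (i, q, t, r)) * (∑ i, ∑ r, ρ (i, q, t, r) (i, j, k, r))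

/-- `tr(ρ_α²)` for `α = {2,4}`. -/
noncomputable def t24sq
    (ρ : Matrix (Fin d1 × Fin d2 × Fin d3 × Fin d4) (Fin d1 × Fin d2 × Fin d3 × Fin d4) ℂ) : ℂ :=
  ∑ j, ∑ q, ∑ r, ∑ h, (∑ i, ∑ k, ρ (i, j, k, r) (i, q, k, h)) * (∑ i, ∑ k, ρ (i, q, k, h) (i, j, k, r))

/-- `tr(ρ_α²)` for `α = {3,4}`. -/
noncomputable def t34sq
    (ρ : Matrix (Fin d1 × Fin d2 × Fin d3 × Fin d4) (Fin d1 × Fin d2 × Fin d3 × Fin d4) ℂ) : ℂ :=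
  ∑ k, ∑ t, ∑ r, ∑ h, (∑ i, ∑ j, ρ (i, j, k, r) (i, j, t, h)) * (∑ i, ∑ j, ρ (i, j, t, h) (i, j, k, r))

/-- `tr(ρ_α²)` for `α = {1,2,3}`. -/
noncomputable def t123sq
    (ρ : Matrix (Fin d1 × Fin d2 × Fin d3 × Fin d4) (Fin d1 × Fin d2 × Fin d3 × Fin d4) ℂ) : ℂ :=
  ∑ i, ∑ p, ∑ j, ∑ q, ∑ k, ∑ t, (∑ r, ρ (i, j, k, r) (p, q, t, r)) * (∑ r, ρ (p, q, t, r) (i, j, k, r))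

/-- `tr(ρ_α²)` for `α = {1,2,4}`. -/
noncomputable def t124sq
    (ρ : Matrix (Fin d1 × Fin d2 × Fin d3 × Fin d4) (Fin d1 × Fin d2 × Fin d3 × Fin d4) ℂ) : ℂ :=
  ∑ i, ∑ p, ∑ j, ∑ q, ∑ r, ∑ h, (∑ k, ρ (i, j, k, r) (p, q, k, h)) * (∑ k, ρ (p, q, k, h) (i, j, k, r))

/-- `tr(ρ_α²)` for `α = {1,3,4}`. -/
noncomputable def t134sq
    (ρ : Matrix (Fin d1 × Fin d2 × Fin d3 × Fin d4) (Fin d1 × Fin d2 × Fin d3 × Fin d4) ℂ) : ℂ :=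
  ∑ i, ∑ p, ∑ k, ∑ t, ∑ r, ∑ h, (∑ j, ρ (i, j, k, r) (p, j, t, h)) * (∑ j, ρ (p, j, t, h) (i, j, k, r))

/-- `tr(ρ_α²)` for `α = {2,3,4}`. -/
noncomputable def t234sq
    (ρ : Matrix (Fin d1 × Fin d2 × Fin d3 × Fin d4) (Fin d1 × Fin d2 × Fin d3 × Fin d4) ℂ) : ℂ :=
  ∑ j, ∑ q, ∑ k, ∑ t, ∑ r, ∑ h, (∑ i, ρ (i, j, k, r) (i, q, t, h)) * (∑ i, ρ (i, q, t, h) (i, j, k, r))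

/-- Four-partite pure-state concurrence
`C₄(|φ⟩) = 2^{1−4/2} √((2⁴−2) − Σ_α tr(ρ_α²))`, where `α` runs over the
fourteen nonempty proper subsets of `{1,2,3,4}`. -/
noncomputable def pureC4 (φ : Fin d1 × Fin d2 × Fin d3 × Fin d4 → ℂ) : ℝ :=
  (2 : ℝ) ^ ((1 : ℝ) - (4 : ℝ) / 2) *
    Real.sqrt (((2 : ℝ) ^ (4 : ℕ) - 2) -
      (t1sq (outer φ) +
        t2sq (outer φ) +
        t3sq (outer φ) +
        t4sq (outer φ) +
        t12sq (outer φ) +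
        t13sq (outer φ) +
        t14sq (outer φ) +
        t23sq (outer φ) +
        t24sq (outer φ) +
        t34sq (outer φ) +
        t123sq (outer φ) +
        t124sq (outer φ) +
        t134sq (outer φ) +
        t234sq (outer φ)).re)


/-- Squared concurrence of a (possibly unnormalized) four-partite vector,
given by the homogeneous seven-term coefficient formula. -/
noncomputable def C4sqCoeff {n1 n2 n3 n4 : ℕ}
    (b : Fin n1 × Fin n2 × Fin n3 × Fin n4 → ℂ) : ℝ :=
  (1 / 4) * ∑ i, ∑ p, ∑ j, ∑ q, ∑ k, ∑ t, ∑ r, ∑ h,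
    (‖b (i, j, k, r) * b (p, q, t, h) - b (p, j, k, r) * b (i, q, t, h)‖ ^ 2 +
     ‖b (i, j, k, r) * b (p, q, t, h) - b (i, q, k, r) * b (p, j, t, h)‖ ^ 2 +
     ‖b (i, j, k, r) * b (p, q, t, h) - b (i, j, t, r) * b (p, q, k, h)‖ ^ 2 +
     ‖b (i, j, k, r) * b (p, q, t, h) - b (i, j, k, h) * b (p, q, t, r)‖ ^ 2 +
     ‖b (i, j, k, r) * b (p, q, t, h) - b (p, q, k, r) * b (i, j, t, h)‖ ^ 2 +
     ‖b (i, j, k, r) * b (p, q, t, h) - b (p, j, t, r) * b (i, q, k, h)‖ ^ 2 +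
     ‖b (i, j, k, r) * b (p, q, t, h) - b (p, j, k, h) * b (i, q, t, r)‖ ^ 2)


/-- The (unnormalized) `s⊗s⊗s⊗s` substate of a four-partite vector `a`
determined by `s`-element subsets `S₁, S₂, S₃, S₄` of the four factors. -/
noncomputable def subvec {s : ℕ} (a : Fin d1 × Fin d2 × Fin d3 × Fin d4 → ℂ)
    (S1 : Finset (Fin d1)) (S2 : Finset (Fin d2))
    (S3 : Finset (Fin d3)) (S4 : Finset (Fin d4))
    (h1 : S1.card = s) (h2 : S2.card = s) (h3 : S3.card = s) (h4 : S4.card = s) :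
    Fin s × Fin s × Fin s × Fin s → ℂ :=
  fun x => a (S1.orderEmbOfFin h1 x.1, S2.orderEmbOfFin h2 x.2.1,
              S3.orderEmbOfFin h3 x.2.2.1, S4.orderEmbOfFin h4 x.2.2.2)

/-!
For a pair `w = (x, y)` of multi-indices and a set `c` of tensor factors, let `w_c` be the pair
obtained by exchanging the coordinates of `x` and `y` in the factors of `c`, and call
`|a_x a_y - a_{w_c}|²` the defect of `a` at `(c, w)`. Every purity `tr ρ_α²` is the overlap
`Σ_w a_x a_y conj(a_{w_α})`, so for a unit vector `C₄²(a)` is `1/8` of the total defect over all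
`c` and `w`. Exchanging the sums on the right-hand side, the defect at `w` is counted once for each
choice of `s`-subsets `S_l ∋ x_l, y_l`, that is `∏_l C(d_l - 1, s - 1)` or `C(d_l - 2, s - 2)`
according as `x_l = y_l` or not. The defect vanishes unless `x` and `y` differ in at least two
factors, and then this weight is at most `C(d₁-2,s-2) C(d₂-2,s-2) C(d₃-1,s-1) C(d₄-1,s-1)`, since
`(s-1) C(d-1,s-1) = (d-1) C(d-2,s-2)` makes `C(d-1,s-1) / C(d-2,s-2)` increasing in `d`.
-/

section Swap

variable {ι₁ ι₂ ι₃ ι₄ : Type*}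

def swapCoords (c : Bool × Bool × Bool × Bool)
    (w : (ι₁ × ι₂ × ι₃ × ι₄) × (ι₁ × ι₂ × ι₃ × ι₄)) :
    (ι₁ × ι₂ × ι₃ × ι₄) × (ι₁ × ι₂ × ι₃ × ι₄) :=
  ((bif c.1 then w.2.1 else w.1.1, bif c.2.1 then w.2.2.1 else w.1.2.1,
      bif c.2.2.1 then w.2.2.2.1 else w.1.2.2.1, bif c.2.2.2 then w.2.2.2.2 else w.1.2.2.2),
    (bif c.1 then w.1.1 else w.2.1, bif c.2.1 then w.1.2.1 else w.2.2.1,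
      bif c.2.2.1 then w.1.2.2.1 else w.2.2.2.1, bif c.2.2.2 then w.1.2.2.2 else w.2.2.2.2))

theorem swapCoords_involutive (c : Bool × Bool × Bool × Bool) :
    Function.Involutive (swapCoords (ι₁ := ι₁) (ι₂ := ι₂) (ι₃ := ι₃) (ι₄ := ι₄) c) := by
  obtain ⟨_ | _, _ | _, _ | _, _ | _⟩ := c <;> intro w <;> rfl

noncomputable def swapDefect (b : ι₁ × ι₂ × ι₃ × ι₄ → ℂ) (c : Bool × Bool × Bool × Bool)
    (w : (ι₁ × ι₂ × ι₃ × ι₄) × (ι₁ × ι₂ × ι₃ × ι₄)) : ℝ :=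
  ‖b w.1 * b w.2 - b (swapCoords c w).1 * b (swapCoords c w).2‖ ^ 2

noncomputable def swapOverlap [Fintype ι₁] [Fintype ι₂] [Fintype ι₃] [Fintype ι₄]
    (b : ι₁ × ι₂ × ι₃ × ι₄ → ℂ) (c : Bool × Bool × Bool × Bool) : ℂ :=
  ∑ w, b w.1 * b w.2 * starRingEnd ℂ (b (swapCoords c w).1 * b (swapCoords c w).2)

theorem sum_normSq_sub_comp_perm {κ : Type*} [Fintype κ] (u : κ → ℂ) (e : Equiv.Perm κ) :
    ∑ k, Complex.normSq (u k - u (e k))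
      = 2 * ∑ k, Complex.normSq (u k) - 2 * (∑ k, u k * starRingEnd ℂ (u (e k))).re := by
  simp only [Complex.normSq_sub, Finset.sum_sub_distrib, Finset.sum_add_distrib,
    Equiv.sum_comp e (fun k => Complex.normSq (u k)), Complex.re_sum, ← Finset.mul_sum]
  ring

theorem sum_swapDefect [Fintype ι₁] [Fintype ι₂] [Fintype ι₃] [Fintype ι₄]
    (b : ι₁ × ι₂ × ι₃ × ι₄ → ℂ) (hb : ∑ x, Complex.normSq (b x) = 1)
    (c : Bool × Bool × Bool × Bool) :
    ∑ w, swapDefect b c w = 2 - 2 * (swapOverlap b c).re := by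
  have hprod : ∑ w : (ι₁ × ι₂ × ι₃ × ι₄) × (ι₁ × ι₂ × ι₃ × ι₄),
      Complex.normSq (b w.1 * b w.2) = 1 := by
    rw [Fintype.sum_prod_type]
    simp only [Complex.normSq_mul, ← Finset.sum_mul_sum, hb, one_mul]
  have h := sum_normSq_sub_comp_perm (fun w => b w.1 * b w.2) (swapCoords_involutive c).toPerm
  rw [hprod, mul_one] at h
  simpa only [swapDefect, swapOverlap, Complex.sq_norm, Function.Involutive.coe_toPerm] using h

theorem swapDefect_comp_map {κ₁ κ₂ κ₃ κ₄ : Type*} (b : κ₁ × κ₂ × κ₃ × κ₄ → ℂ)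
    (f₁ : ι₁ → κ₁) (f₂ : ι₂ → κ₂) (f₃ : ι₃ → κ₃) (f₄ : ι₄ → κ₄) (c : Bool × Bool × Bool × Bool)
    (w : (ι₁ × ι₂ × ι₃ × ι₄) × (ι₁ × ι₂ × ι₃ × ι₄)) :
    swapDefect (b ∘ Prod.map f₁ (Prod.map f₂ (Prod.map f₃ f₄))) c w =
      swapDefect b c (Prod.map f₁ (Prod.map f₂ (Prod.map f₃ f₄)) w.1,
        Prod.map f₁ (Prod.map f₂ (Prod.map f₃ f₄)) w.2) := by
  obtain ⟨_ | _, _ | _, _ | _, _ | _⟩ := c <;> rfl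

variable [DecidableEq ι₁] [DecidableEq ι₂] [DecidableEq ι₃] [DecidableEq ι₄]

def numDiff (x y : ι₁ × ι₂ × ι₃ × ι₄) : ℕ :=
  (if x.1 = y.1 then 0 else 1) + (if x.2.1 = y.2.1 then 0 else 1) +
    (if x.2.2.1 = y.2.2.1 then 0 else 1) + (if x.2.2.2 = y.2.2.2 then 0 else 1)

theorem swapDefect_eq_zero_of_numDiff_le_one (b : ι₁ × ι₂ × ι₃ × ι₄ → ℂ)
    (c : Bool × Bool × Bool × Bool) {x y : ι₁ × ι₂ × ι₃ × ι₄} (h : numDiff x y ≤ 1) :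
    swapDefect b c (x, y) = 0 := by
  obtain ⟨x₁, x₂, x₃, x₄⟩ := x
  obtain ⟨y₁, y₂, y₃, y₄⟩ := y
  simp only [numDiff] at h
  split_ifs at h <;> try omega
  all_goals
    subst_vars
    obtain ⟨_ | _, _ | _, _ | _, _ | _⟩ := c <;> simp [swapDefect, swapCoords, mul_comm]

end Swap

theorem C4sqCoeff_nonneg {n1 n2 n3 n4 : ℕ} (b : Fin n1 × Fin n2 × Fin n3 × Fin n4 → ℂ) :
    0 ≤ C4sqCoeff b := by
  unfold C4sqCoeff
  positivity

/-- Each of the seven bipartitions of the factors occurs twice among the sixteen `c`, as `c` and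
as its complement, and the two trivial `c` contribute nothing. -/
theorem C4sqCoeff_eq_sum_swapDefect {n1 n2 n3 n4 : ℕ}
    (b : Fin n1 × Fin n2 × Fin n3 × Fin n4 → ℂ) :
    C4sqCoeff b = (1 / 8) * ∑ w, ∑ c, swapDefect b c w := by
  conv_lhs => simp only [C4sqCoeff, ← Fintype.sum_prod_type']
  rw [Finset.mul_sum, Finset.mul_sum]
  refine Fintype.sum_equiv (Equiv.mk (fun (i, p, j, q, k, t, r, h) => ((i, j, k, r), (p, q, t, h)))
    (fun ((i, j, k, r), (p, q, t, h)) => (i, p, j, q, k, t, r, h)) (fun _ => rfl) (fun _ => rfl))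
    _ _ fun ⟨i, p, j, q, k, t, r, h⟩ => ?_
  simp only [Fintype.sum_prod_type, Fintype.sum_bool, swapDefect, swapCoords, cond_true,
    cond_false, Equiv.coe_fn_mk]
  ring_nf
  simp only [norm_zero]
  ring

section Purity

variable {d1 d2 d3 d4 : ℕ}

/- In each case `c` is the indicator of `α`, and the equivalence matches the summation variables
of `tαsq`, in the order in which unfolding produces them, with `((i, j, k, r), (p, q, t, h))`. -/

theorem t1sq_outer (a : Fin d1 × Fin d2 × Fin d3 × Fin d4 → ℂ) :
    t1sq (outer a) = swapOverlap a (true, false, false, false) := by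
  simp only [t1sq, outer, Matrix.of_apply, Finset.sum_mul, Finset.mul_sum,
    ← Fintype.sum_prod_type']
  refine Fintype.sum_equiv ⟨fun (i, p, (q, t, h), (j, k, r)) => ((i, j, k, r), (p, q, t, h)),
    fun ((i, j, k, r), (p, q, t, h)) => (i, p, (q, t, h), (j, k, r)),
    fun _ => rfl, fun _ => rfl⟩ _ _ ?_
  rintro ⟨i, p, ⟨q, t, h⟩, ⟨j, k, r⟩⟩
  simp only [swapCoords, cond_true, cond_false, map_mul, Equiv.coe_fn_mk]
  ring

theorem t2sq_outer (a : Fin d1 × Fin d2 × Fin d3 × Fin d4 → ℂ) :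
    t2sq (outer a) = swapOverlap a (false, true, false, false) := by
  simp only [t2sq, outer, Matrix.of_apply, Finset.sum_mul, Finset.mul_sum,
    ← Fintype.sum_prod_type']
  refine Fintype.sum_equiv ⟨fun (j, q, (p, t, h), (i, k, r)) => ((i, j, k, r), (p, q, t, h)),
    fun ((i, j, k, r), (p, q, t, h)) => (j, q, (p, t, h), (i, k, r)),
    fun _ => rfl, fun _ => rfl⟩ _ _ ?_
  rintro ⟨j, q, ⟨p, t, h⟩, ⟨i, k, r⟩⟩
  simp only [swapCoords, cond_true, cond_false, map_mul, Equiv.coe_fn_mk]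
  ring

theorem t3sq_outer (a : Fin d1 × Fin d2 × Fin d3 × Fin d4 → ℂ) :
    t3sq (outer a) = swapOverlap a (false, false, true, false) := by
  simp only [t3sq, outer, Matrix.of_apply, Finset.sum_mul, Finset.mul_sum,
    ← Fintype.sum_prod_type']
  refine Fintype.sum_equiv ⟨fun (k, t, (p, q, h), (i, j, r)) => ((i, j, k, r), (p, q, t, h)),
    fun ((i, j, k, r), (p, q, t, h)) => (k, t, (p, q, h), (i, j, r)),
    fun _ => rfl, fun _ => rfl⟩ _ _ ?_
  rintro ⟨k, t, ⟨p, q, h⟩, ⟨i, j, r⟩⟩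
  simp only [swapCoords, cond_true, cond_false, map_mul, Equiv.coe_fn_mk]
  ring

theorem t4sq_outer (a : Fin d1 × Fin d2 × Fin d3 × Fin d4 → ℂ) :
    t4sq (outer a) = swapOverlap a (false, false, false, true) := by
  simp only [t4sq, outer, Matrix.of_apply, Finset.sum_mul, Finset.mul_sum,
    ← Fintype.sum_prod_type']
  refine Fintype.sum_equiv ⟨fun (r, h, (p, q, t), (i, j, k)) => ((i, j, k, r), (p, q, t, h)),
    fun ((i, j, k, r), (p, q, t, h)) => (r, h, (p, q, t), (i, j, k)),
    fun _ => rfl, fun _ => rfl⟩ _ _ ?_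
  rintro ⟨r, h, ⟨p, q, t⟩, ⟨i, j, k⟩⟩
  simp only [swapCoords, cond_true, cond_false, map_mul, Equiv.coe_fn_mk]
  ring

theorem t12sq_outer (a : Fin d1 × Fin d2 × Fin d3 × Fin d4 → ℂ) :
    t12sq (outer a) = swapOverlap a (true, true, false, false) := by
  simp only [t12sq, outer, Matrix.of_apply, Finset.sum_mul, Finset.mul_sum,
    ← Fintype.sum_prod_type']
  refine Fintype.sum_equiv ⟨fun (i, p, j, q, (t, h), (k, r)) => ((i, j, k, r), (p, q, t, h)),
    fun ((i, j, k, r), (p, q, t, h)) => (i, p, j, q, (t, h), (k, r)),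
    fun _ => rfl, fun _ => rfl⟩ _ _ ?_
  rintro ⟨i, p, j, q, ⟨t, h⟩, ⟨k, r⟩⟩
  simp only [swapCoords, cond_true, cond_false, map_mul, Equiv.coe_fn_mk]
  ring

theorem t13sq_outer (a : Fin d1 × Fin d2 × Fin d3 × Fin d4 → ℂ) :
    t13sq (outer a) = swapOverlap a (true, false, true, false) := by
  simp only [t13sq, outer, Matrix.of_apply, Finset.sum_mul, Finset.mul_sum,
    ← Fintype.sum_prod_type']
  refine Fintype.sum_equiv ⟨fun (i, p, k, t, (q, h), (j, r)) => ((i, j, k, r), (p, q, t, h)),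
    fun ((i, j, k, r), (p, q, t, h)) => (i, p, k, t, (q, h), (j, r)),
    fun _ => rfl, fun _ => rfl⟩ _ _ ?_
  rintro ⟨i, p, k, t, ⟨q, h⟩, ⟨j, r⟩⟩
  simp only [swapCoords, cond_true, cond_false, map_mul, Equiv.coe_fn_mk]
  ring

theorem t14sq_outer (a : Fin d1 × Fin d2 × Fin d3 × Fin d4 → ℂ) :
    t14sq (outer a) = swapOverlap a (true, false, false, true) := by
  simp only [t14sq, outer, Matrix.of_apply, Finset.sum_mul, Finset.mul_sum,
    ← Fintype.sum_prod_type']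
  refine Fintype.sum_equiv ⟨fun (i, p, r, h, (q, t), (j, k)) => ((i, j, k, r), (p, q, t, h)),
    fun ((i, j, k, r), (p, q, t, h)) => (i, p, r, h, (q, t), (j, k)),
    fun _ => rfl, fun _ => rfl⟩ _ _ ?_
  rintro ⟨i, p, r, h, ⟨q, t⟩, ⟨j, k⟩⟩
  simp only [swapCoords, cond_true, cond_false, map_mul, Equiv.coe_fn_mk]
  ring

theorem t23sq_outer (a : Fin d1 × Fin d2 × Fin d3 × Fin d4 → ℂ) :
    t23sq (outer a) = swapOverlap a (false, true, true, false) := by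
  simp only [t23sq, outer, Matrix.of_apply, Finset.sum_mul, Finset.mul_sum,
    ← Fintype.sum_prod_type']
  refine Fintype.sum_equiv ⟨fun (j, q, k, t, (p, h), (i, r)) => ((i, j, k, r), (p, q, t, h)),
    fun ((i, j, k, r), (p, q, t, h)) => (j, q, k, t, (p, h), (i, r)),
    fun _ => rfl, fun _ => rfl⟩ _ _ ?_
  rintro ⟨j, q, k, t, ⟨p, h⟩, ⟨i, r⟩⟩
  simp only [swapCoords, cond_true, cond_false, map_mul, Equiv.coe_fn_mk]
  ring

theorem t24sq_outer (a : Fin d1 × Fin d2 × Fin d3 × Fin d4 → ℂ) :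
    t24sq (outer a) = swapOverlap a (false, true, false, true) := by
  simp only [t24sq, outer, Matrix.of_apply, Finset.sum_mul, Finset.mul_sum,
    ← Fintype.sum_prod_type']
  refine Fintype.sum_equiv ⟨fun (j, q, r, h, (p, t), (i, k)) => ((i, j, k, r), (p, q, t, h)),
    fun ((i, j, k, r), (p, q, t, h)) => (j, q, r, h, (p, t), (i, k)),
    fun _ => rfl, fun _ => rfl⟩ _ _ ?_
  rintro ⟨j, q, r, h, ⟨p, t⟩, ⟨i, k⟩⟩
  simp only [swapCoords, cond_true, cond_false, map_mul, Equiv.coe_fn_mk]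
  ring

theorem t34sq_outer (a : Fin d1 × Fin d2 × Fin d3 × Fin d4 → ℂ) :
    t34sq (outer a) = swapOverlap a (false, false, true, true) := by
  simp only [t34sq, outer, Matrix.of_apply, Finset.sum_mul, Finset.mul_sum,
    ← Fintype.sum_prod_type']
  refine Fintype.sum_equiv ⟨fun (k, t, r, h, (p, q), (i, j)) => ((i, j, k, r), (p, q, t, h)),
    fun ((i, j, k, r), (p, q, t, h)) => (k, t, r, h, (p, q), (i, j)),
    fun _ => rfl, fun _ => rfl⟩ _ _ ?_
  rintro ⟨k, t, r, h, ⟨p, q⟩, ⟨i, j⟩⟩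
  simp only [swapCoords, cond_true, cond_false, map_mul, Equiv.coe_fn_mk]
  ring

theorem t123sq_outer (a : Fin d1 × Fin d2 × Fin d3 × Fin d4 → ℂ) :
    t123sq (outer a) = swapOverlap a (true, true, true, false) := by
  simp only [t123sq, outer, Matrix.of_apply, Finset.sum_mul, Finset.mul_sum,
    ← Fintype.sum_prod_type']
  refine Fintype.sum_equiv ⟨fun (i, p, j, q, k, t, h, r) => ((i, j, k, r), (p, q, t, h)),
    fun ((i, j, k, r), (p, q, t, h)) => (i, p, j, q, k, t, h, r),
    fun _ => rfl, fun _ => rfl⟩ _ _ ?_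
  rintro ⟨i, p, j, q, k, t, h, r⟩
  simp only [swapCoords, cond_true, cond_false, map_mul, Equiv.coe_fn_mk]
  ring

theorem t124sq_outer (a : Fin d1 × Fin d2 × Fin d3 × Fin d4 → ℂ) :
    t124sq (outer a) = swapOverlap a (true, true, false, true) := by
  simp only [t124sq, outer, Matrix.of_apply, Finset.sum_mul, Finset.mul_sum,
    ← Fintype.sum_prod_type']
  refine Fintype.sum_equiv ⟨fun (i, p, j, q, r, h, t, k) => ((i, j, k, r), (p, q, t, h)),
    fun ((i, j, k, r), (p, q, t, h)) => (i, p, j, q, r, h, t, k),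
    fun _ => rfl, fun _ => rfl⟩ _ _ ?_
  rintro ⟨i, p, j, q, r, h, t, k⟩
  simp only [swapCoords, cond_true, cond_false, map_mul, Equiv.coe_fn_mk]
  ring

theorem t134sq_outer (a : Fin d1 × Fin d2 × Fin d3 × Fin d4 → ℂ) :
    t134sq (outer a) = swapOverlap a (true, false, true, true) := by
  simp only [t134sq, outer, Matrix.of_apply, Finset.sum_mul, Finset.mul_sum,
    ← Fintype.sum_prod_type']
  refine Fintype.sum_equiv ⟨fun (i, p, k, t, r, h, q, j) => ((i, j, k, r), (p, q, t, h)),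
    fun ((i, j, k, r), (p, q, t, h)) => (i, p, k, t, r, h, q, j),
    fun _ => rfl, fun _ => rfl⟩ _ _ ?_
  rintro ⟨i, p, k, t, r, h, q, j⟩
  simp only [swapCoords, cond_true, cond_false, map_mul, Equiv.coe_fn_mk]
  ring

theorem t234sq_outer (a : Fin d1 × Fin d2 × Fin d3 × Fin d4 → ℂ) :
    t234sq (outer a) = swapOverlap a (false, true, true, true) := by
  simp only [t234sq, outer, Matrix.of_apply, Finset.sum_mul, Finset.mul_sum,
    ← Fintype.sum_prod_type']
  refine Fintype.sum_equiv ⟨fun (j, q, k, t, r, h, p, i) => ((i, j, k, r), (p, q, t, h)),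
    fun ((i, j, k, r), (p, q, t, h)) => (j, q, k, t, r, h, p, i),
    fun _ => rfl, fun _ => rfl⟩ _ _ ?_
  rintro ⟨j, q, k, t, r, h, p, i⟩
  simp only [swapCoords, cond_true, cond_false, map_mul, Equiv.coe_fn_mk]
  ring

theorem pureC4_sq (a : Fin d1 × Fin d2 × Fin d3 × Fin d4 → ℂ)
    (ha : ∑ x, Complex.normSq (a x) = 1) : pureC4 a ^ 2 = C4sqCoeff a := by
  have hid : (swapOverlap a (false, false, false, false)).re = 1 := by
    have h0 : ∑ w, swapDefect a (false, false, false, false) w = 0 := by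
      simp [swapDefect, swapCoords]
    linarith [sum_swapDefect a ha (false, false, false, false)]
  have hswap : (swapOverlap a (true, true, true, true)).re = 1 := by
    have h0 : ∑ w, swapDefect a (true, true, true, true) w = 0 := by
      simp [swapDefect, swapCoords, mul_comm]
    linarith [sum_swapDefect a ha (true, true, true, true)]
  have key : ((2 : ℝ) ^ 4 - 2) - (t1sq (outer a) + t2sq (outer a) + t3sq (outer a) +
      t4sq (outer a) + t12sq (outer a) + t13sq (outer a) + t14sq (outer a) + t23sq (outer a) +
      t24sq (outer a) + t34sq (outer a) + t123sq (outer a) + t124sq (outer a) +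
      t134sq (outer a) + t234sq (outer a)).re = 4 * C4sqCoeff a := by
    rw [C4sqCoeff_eq_sum_swapDefect, Finset.sum_comm]
    simp only [sum_swapDefect a ha, Fintype.sum_prod_type, Fintype.sum_bool, t1sq_outer,
      t2sq_outer, t3sq_outer, t4sq_outer, t12sq_outer, t13sq_outer, t14sq_outer, t23sq_outer,
      t24sq_outer, t34sq_outer, t123sq_outer, t124sq_outer, t134sq_outer, t234sq_outer,
      Complex.add_re]
    linarith
  rw [pureC4, mul_pow,
    Real.sq_sqrt (by rw [key]; exact mul_nonneg (by norm_num) (C4sqCoeff_nonneg a)), key,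
    show (1 : ℝ) - 4 / 2 = -1 by norm_num, Real.rpow_neg_one]
  ring

end Purity

section Cover

open Finset

variable {α : Type*} [Fintype α] [DecidableEq α]

def coverSets (s : ℕ) (x y : α) : Finset (Finset α) :=
  {S | S.card = s ∧ x ∈ S ∧ y ∈ S}

theorem card_coverSets {s : ℕ} (hs : 2 ≤ s) (x y : α) :
    #(coverSets s x y) = if x = y then (Fintype.card α - 1).choose (s - 1)
      else (Fintype.card α - 2).choose (s - 2) := by
  have hfilter : coverSets s x y = {S ∈ powersetCard s (univ : Finset α) | {x, y} ⊆ S} := by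
    ext S
    simp [coverSets, insert_subset_iff]
  rw [hfilter, card_filter_powersetCard_subset _ _ _ (subset_univ _)
    ((card_le_two (a := x) (b := y)).trans hs), card_univ]
  split_ifs with h <;> simp [h]

variable {ι₁ ι₂ ι₃ ι₄ : Type*} [Fintype ι₁] [Fintype ι₂] [Fintype ι₃] [Fintype ι₄]
  [DecidableEq ι₁] [DecidableEq ι₂] [DecidableEq ι₃] [DecidableEq ι₄]

def coverWeight (s : ℕ) (w : (ι₁ × ι₂ × ι₃ × ι₄) × (ι₁ × ι₂ × ι₃ × ι₄)) : ℕ :=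
  #(coverSets s w.1.1 w.2.1) * #(coverSets s w.1.2.1 w.2.2.1) *
    #(coverSets s w.1.2.2.1 w.2.2.2.1) * #(coverSets s w.1.2.2.2 w.2.2.2.2)

end Cover

section Substates

open Finset

variable {d1 d2 d3 d4 s : ℕ}

theorem C4sqCoeff_subvec (a : Fin d1 × Fin d2 × Fin d3 × Fin d4 → ℂ)
    (S1 : Finset (Fin d1)) (S2 : Finset (Fin d2)) (S3 : Finset (Fin d3)) (S4 : Finset (Fin d4))
    (h1 : S1.card = s) (h2 : S2.card = s) (h3 : S3.card = s) (h4 : S4.card = s) :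
    C4sqCoeff (subvec a S1 S2 S3 S4 h1 h2 h3 h4) =
      (1 / 8) * ∑ w ∈ (S1 ×ˢ S2 ×ˢ S3 ×ˢ S4) ×ˢ (S1 ×ˢ S2 ×ˢ S3 ×ˢ S4), ∑ c, swapDefect a c w := by
  set E := (S1.orderEmbOfFin h1).toEmbedding.prodMap ((S2.orderEmbOfFin h2).toEmbedding.prodMap
    ((S3.orderEmbOfFin h3).toEmbedding.prodMap (S4.orderEmbOfFin h4).toEmbedding))
  have hbox : (univ : Finset ((Fin s × Fin s × Fin s × Fin s) ×
      (Fin s × Fin s × Fin s × Fin s))).map (E.prodMap E) =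
        (S1 ×ˢ S2 ×ˢ S3 ×ˢ S4) ×ˢ (S1 ×ˢ S2 ×ˢ S3 ×ˢ S4) := by
    simp only [E, ← univ_product_univ, prodMap_map_product, map_orderEmbOfFin_univ]
  rw [C4sqCoeff_eq_sum_swapDefect, ← hbox, sum_map]
  exact congrArg _ (sum_congr rfl fun w _ =>
    sum_congr rfl fun c _ => swapDefect_comp_map a _ _ _ _ c w)

theorem sum_C4sqCoeff_subvec (a : Fin d1 × Fin d2 × Fin d3 × Fin d4 → ℂ) :
    (∑ S1 : Finset (Fin d1), ∑ S2 : Finset (Fin d2), ∑ S3 : Finset (Fin d3),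
        ∑ S4 : Finset (Fin d4),
        if h : S1.card = s ∧ S2.card = s ∧ S3.card = s ∧ S4.card = s then
          C4sqCoeff (subvec a S1 S2 S3 S4 h.1 h.2.1 h.2.2.1 h.2.2.2)
        else 0) =
      (1 / 8) * ∑ w, (coverWeight s w : ℝ) * ∑ c, swapDefect a c w := by
  simp only [C4sqCoeff_subvec, dite_eq_ite, ← Fintype.sum_prod_type']
  rw [← sum_filter, ← mul_sum, sum_comm' (t' := univ) (s' := fun w =>
    coverSets s w.1.1 w.2.1 ×ˢ coverSets s w.1.2.1 w.2.2.1 ×ˢ coverSets s w.1.2.2.1 w.2.2.2.1 ×ˢ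
      coverSets s w.1.2.2.2 w.2.2.2.2)]
  · simp only [sum_const, card_product, nsmul_eq_mul, coverWeight, Nat.cast_mul, mul_assoc]
  · intro S w
    simp only [coverSets, mem_filter, mem_univ, mem_product, true_and, and_true]
    tauto

end Substates

section Binomial

theorem choose_le_succ_choose_succ (n k : ℕ) : n.choose k ≤ (n + 1).choose (k + 1) := by
  rw [Nat.choose_succ_succ]
  exact Nat.le_add_right _ _

theorem succ_choose_succ_mul_choose_le {m n : ℕ} (hmn : m ≤ n) (k : ℕ) :
    (m + 1).choose (k + 1) * n.choose k ≤ m.choose k * (n + 1).choose (k + 1) := by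
  refine Nat.le_of_mul_le_mul_left ?_ k.succ_pos
  calc (k + 1) * ((m + 1).choose (k + 1) * n.choose k)
      = (m + 1) * m.choose k * n.choose k := by rw [Nat.add_one_mul_choose_eq]; ring
    _ ≤ (n + 1) * m.choose k * n.choose k := by gcongr
    _ = (k + 1) * (m.choose k * (n + 1).choose (k + 1)) := by
        rw [mul_right_comm, Nat.add_one_mul_choose_eq n]; ring

theorem ite_mul_ite_le {p q : Prop} [Decidable p] [Decidable q] {a b a' b' : ℕ} (ha' : a' ≤ b')
    (hx : b * a' ≤ a * b') (hpq : ¬(p ∧ q)) :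
    (if p then b else a) * (if q then b' else a') ≤ a * b' := by
  split_ifs with hp hq hq
  · exact absurd ⟨hp, hq⟩ hpq
  · exact hx
  · exact le_rfl
  · exact Nat.mul_le_mul_left a ha'

/-- Pair factor `1` with `3` and factor `2` with `4`: at most one pair takes both `b`-values, and
then the other takes both `a`-values. -/
theorem ite_prod_le {p₁ p₂ p₃ p₄ : Prop} [Decidable p₁] [Decidable p₂] [Decidable p₃]
    [Decidable p₄] {a₁ a₂ a₃ a₄ b₁ b₂ b₃ b₄ : ℕ} (h₃ : a₃ ≤ b₃) (h₄ : a₄ ≤ b₄)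
    (h₁₃ : b₁ * a₃ ≤ a₁ * b₃) (h₁₄ : b₁ * a₄ ≤ a₁ * b₄) (h₂₃ : b₂ * a₃ ≤ a₂ * b₃)
    (h₂₄ : b₂ * a₄ ≤ a₂ * b₄)
    (h : 2 ≤ (if p₁ then 0 else 1) + (if p₂ then 0 else 1) + (if p₃ then 0 else 1) +
      (if p₄ then 0 else 1)) :
    (if p₁ then b₁ else a₁) * (if p₂ then b₂ else a₂) * (if p₃ then b₃ else a₃) *
      (if p₄ then b₄ else a₄) ≤ a₁ * a₂ * b₃ * b₄ := by
  by_cases hp₁₃ : p₁ ∧ p₃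
  · obtain ⟨hp₂, hp₄⟩ : ¬p₂ ∧ ¬p₄ := by
      constructor <;> intro hp <;> simp only [hp₁₃, hp, if_true] at h <;> split_ifs at h <;> omega
    simp only [hp₁₃, hp₂, hp₄, if_true, if_false]
    calc b₁ * a₂ * b₃ * a₄ = (b₁ * a₄) * (a₂ * b₃) := by ring
      _ ≤ (a₁ * b₄) * (a₂ * b₃) := Nat.mul_le_mul_right _ h₁₄
      _ = a₁ * a₂ * b₃ * b₄ := by ring
  by_cases hp₂₄ : p₂ ∧ p₄
  · obtain ⟨hp₁, hp₃⟩ : ¬p₁ ∧ ¬p₃ := by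
      constructor <;> intro hp <;> simp only [hp₂₄, hp, if_true] at h <;> split_ifs at h <;> omega
    simp only [hp₂₄, hp₁, hp₃, if_true, if_false]
    calc a₁ * b₂ * a₃ * b₄ = (b₂ * a₃) * (a₁ * b₄) := by ring
      _ ≤ (a₂ * b₃) * (a₁ * b₄) := Nat.mul_le_mul_right _ h₂₃
      _ = a₁ * a₂ * b₃ * b₄ := by ring
  calc _ = ((if p₁ then b₁ else a₁) * (if p₃ then b₃ else a₃)) *
        ((if p₂ then b₂ else a₂) * (if p₄ then b₄ else a₄)) := by ring
    _ ≤ (a₁ * b₃) * (a₂ * b₄) :=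
        Nat.mul_le_mul (ite_mul_ite_le h₃ h₁₃ hp₁₃) (ite_mul_ite_le h₄ h₂₄ hp₂₄)
    _ = a₁ * a₂ * b₃ * b₄ := by ring

end Binomial

section Weight

variable {d1 d2 d3 d4 s : ℕ}

theorem coverWeight_le (hd1 : 2 ≤ d1) (hd12 : d1 ≤ d2) (hd23 : d2 ≤ d3) (hd34 : d3 ≤ d4)
    (hs : 2 ≤ s)
    (w : (Fin d1 × Fin d2 × Fin d3 × Fin d4) × (Fin d1 × Fin d2 × Fin d3 × Fin d4))
    (hw : 2 ≤ numDiff w.1 w.2) :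
    coverWeight s w ≤ (d1 - 2).choose (s - 2) * (d2 - 2).choose (s - 2) *
      (d3 - 1).choose (s - 1) * (d4 - 1).choose (s - 1) := by
  simp only [coverWeight, card_coverSets hs, Fintype.card_fin]
  obtain ⟨k, rfl⟩ : ∃ k, s = k + 2 := ⟨s - 2, by omega⟩
  have hpred : ∀ d, 2 ≤ d → d - 1 = d - 2 + 1 := by omega
  simp only [hpred d1 hd1, hpred d2 (by omega), hpred d3 (by omega), hpred d4 (by omega),
    Nat.add_sub_cancel]
  exact ite_prod_le (choose_le_succ_choose_succ _ _) (choose_le_succ_choose_succ _ _)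
    (succ_choose_succ_mul_choose_le (by omega) _) (succ_choose_succ_mul_choose_le (by omega) _)
    (succ_choose_succ_mul_choose_le (by omega) _) (succ_choose_succ_mul_choose_le (by omega) _) hw

theorem sum_coverWeight_mul_le (hd1 : 2 ≤ d1) (hd12 : d1 ≤ d2) (hd23 : d2 ≤ d3)
    (hd34 : d3 ≤ d4) (hs : 2 ≤ s) (a : Fin d1 × Fin d2 × Fin d3 × Fin d4 → ℂ) :
    ∑ w, (coverWeight s w : ℝ) * ∑ c, swapDefect a c w ≤
      ((Nat.choose (d1 - 2) (s - 2) * Nat.choose (d2 - 2) (s - 2) *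
          Nat.choose (d3 - 1) (s - 1) * Nat.choose (d4 - 1) (s - 1) : ℕ) : ℝ) *
        ∑ w, ∑ c, swapDefect a c w := by
  rw [Finset.mul_sum]
  refine Finset.sum_le_sum fun w _ => ?_
  by_cases hw : 2 ≤ numDiff w.1 w.2
  · exact mul_le_mul_of_nonneg_right (by exact_mod_cast coverWeight_le hd1 hd12 hd23 hd34 hs w hw)
      (Finset.sum_nonneg fun c _ => sq_nonneg _)
  · simp [swapDefect_eq_zero_of_numDiff_le_one a _ (show numDiff w.1 w.2 ≤ 1 by omega)]

end Weight

theorem stmt_14_general {s : ℕ} (hd1 : 2 ≤ d1) (hd12 : d1 ≤ d2) (hd23 : d2 ≤ d3)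
    (hd34 : d3 ≤ d4) (hs : 2 ≤ s)
    (a : Fin d1 × Fin d2 × Fin d3 × Fin d4 → ℂ)
    (ha : ∑ x, Complex.normSq (a x) = 1) :
    (pureC4 a) ^ 2 ≥
      ((Nat.choose (d1 - 2) (s - 2) * Nat.choose (d2 - 2) (s - 2) *
          Nat.choose (d3 - 1) (s - 1) * Nat.choose (d4 - 1) (s - 1) : ℕ) : ℝ)⁻¹ *
        ∑ S1 : Finset (Fin d1), ∑ S2 : Finset (Fin d2),
          ∑ S3 : Finset (Fin d3), ∑ S4 : Finset (Fin d4),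
          if h : S1.card = s ∧ S2.card = s ∧ S3.card = s ∧ S4.card = s then
            C4sqCoeff (subvec a S1 S2 S3 S4 h.1 h.2.1 h.2.2.1 h.2.2.2)
          else 0 := by
  rw [ge_iff_le, pureC4_sq a ha, sum_C4sqCoeff_subvec]
  refine inv_mul_le_of_le_mul₀ (Nat.cast_nonneg _) (C4sqCoeff_nonneg a) ?_
  rw [C4sqCoeff_eq_sum_swapDefect]
  linarith [sum_coverWeight_mul_le hd1 hd12 hd23 hd34 hs a]

/-- for `2 ≤ d1 ≤ d2 ≤ d3 ≤ d4`, `2 ≤ s ≤ d1` and a unit vector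
`|φ⟩ = Σ a_{ijkr}|ijkr⟩` in `ℂ^{d1}⊗ℂ^{d2}⊗ℂ^{d3}⊗ℂ^{d4}`,
`C₄²(|φ⟩) ≥ [(d1−2 C s−2)(d2−2 C s−2)(d3−1 C s−1)(d4−1 C s−1)]⁻¹ Σ C₄²(|φ⟩_{s⊗s⊗s⊗s})`,
the sum running over all choices of `s`-element subsets of the four factors. -/
theorem stmt_14 {s : ℕ} (hd1 : 2 ≤ d1) (hd12 : d1 ≤ d2) (hd23 : d2 ≤ d3)
    (hd34 : d3 ≤ d4) (hs : 2 ≤ s) (hsd : s ≤ d1)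
    (a : Fin d1 × Fin d2 × Fin d3 × Fin d4 → ℂ)
    (ha : ∑ x, Complex.normSq (a x) = 1) :
    (pureC4 a) ^ 2 ≥
      ((Nat.choose (d1 - 2) (s - 2) * Nat.choose (d2 - 2) (s - 2) *
          Nat.choose (d3 - 1) (s - 1) * Nat.choose (d4 - 1) (s - 1) : ℕ) : ℝ)⁻¹ *
        ∑ S1 : Finset (Fin d1), ∑ S2 : Finset (Fin d2),
          ∑ S3 : Finset (Fin d3), ∑ S4 : Finset (Fin d4),
          if h : S1.card = s ∧ S2.card = s ∧ S3.card = s ∧ S4.card = s then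
            C4sqCoeff (subvec a S1 S2 S3 S4 h.1 h.2.1 h.2.2.1 h.2.2.2)
          else 0 :=
  stmt_14_general hd1 hd12 hd23 hd34 hs a ha

end Stmt14
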